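/- Let N be a positive integer, 𝒩 = {2k - N + 1 : k = 0, ..., N-1}, and let A ⊆ 𝒩 with |A| = n. Then 2·π(𝒩 \ A, A) = n(N-n) - Σ_{a ∈ A} a, where π(A₁,A₂) = #{(a₁,a₂) ∈ A₁ × A₂ : a₁ > a₂}. -/
import Mathlib

/-- π(A,B) = #{(a,b) ∈ A × B : a > b}. -/
def piCount (A B : Finset ℤ) : ℕ := ((A ×ˢ B).filter (fun p => p.2 < p.1)).card

/-- The set 𝒩 = {2k - N + 1 : k = 0, 1, ..., N-1} ⊆ ℤ. -/
def calN (N : ℕ) : Finset ℤ := (Finset.range N).image (fun k : ℕ => 2 * (k : ℤ) - N + 1)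

lemma piCount_eq_sum (S B : Finset ℤ) :
    piCount S B = ∑ b ∈ B, (S.filter (fun s => b < s)).card := by
  unfold piCount
  rw [Finset.card_eq_sum_card_fiberwise (f := Prod.snd) (t := B)
    (fun p hp => (Finset.mem_product.1 (Finset.mem_filter.1 hp).1).2)]
  refine Finset.sum_congr rfl fun b hb => ?_
  have : ((S ×ˢ B).filter (fun p => p.2 < p.1)).filter (fun p => p.2 = b)
      = (S.filter (fun s => b < s)).image (fun s => (s, b)) := by
    ext ⟨x, y⟩
    simp only [Finset.mem_filter, Finset.mem_product, Finset.mem_image]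
    constructor
    · rintro ⟨⟨⟨hx, hy⟩, hlt⟩, rfl⟩
      exact ⟨x, ⟨hx, hlt⟩, rfl⟩
    · rintro ⟨s, ⟨hs, hlt⟩, h⟩
      cases h
      exact ⟨⟨⟨hs, hb⟩, hlt⟩, rfl⟩
  rw [this, Finset.card_image_of_injective _ (fun a b h => (Prod.mk.injEq _ _ _ _ ▸ h).1)]

lemma piCount_self (A : Finset ℤ) : 2 * piCount A A = A.card * A.card - A.card := by
  have hswap : ((A ×ˢ A).filter (fun p => p.2 < p.1)).card
      = ((A ×ˢ A).filter (fun p => p.1 < p.2)).card := by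
    apply Finset.card_bij (fun p _ => Prod.swap p)
    · intro p hp
      simp only [Finset.mem_filter, Finset.mem_product] at hp ⊢
      exact ⟨⟨hp.1.2, hp.1.1⟩, hp.2⟩
    · intro p _ q _ h
      exact Prod.swap_injective h
    · intro p hp
      simp only [Finset.mem_filter, Finset.mem_product] at hp
      exact ⟨Prod.swap p, Finset.mem_filter.2 ⟨Finset.mem_product.2 ⟨hp.1.2, hp.1.1⟩, hp.2⟩, rfl⟩
  have hoff : A.offDiag = (A ×ˢ A).filter (fun p => ¬ p.1 = p.2) := by
    ext ⟨x, y⟩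
    simp [Finset.mem_offDiag]
    tauto
  have hsplit : A.offDiag.card =
      ((A ×ˢ A).filter (fun p => p.2 < p.1)).card + ((A ×ˢ A).filter (fun p => p.1 < p.2)).card := by
    rw [hoff]
    have h1 : (A ×ˢ A).filter (fun p : ℤ × ℤ => ¬ p.1 = p.2)
        = ((A ×ˢ A).filter (fun p => p.2 < p.1)) ∪ ((A ×ˢ A).filter (fun p => p.1 < p.2)) := by
      rw [← Finset.filter_or]
      apply Finset.filter_congr
      intro p _
      constructor
      · intro h; rcases lt_or_gt_of_ne h with h' | h'
        · exact Or.inr h'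
        · exact Or.inl h'
      · rintro (h | h) <;> omega
    rw [h1, Finset.card_union_of_disjoint]
    rw [Finset.disjoint_filter]
    intro p _ h1 h2
    omega
  have := Finset.offDiag_card A
  unfold piCount
  omega

theorem two_piCount_compl (N : ℕ) (hN : 0 < N) (A : Finset ℤ) (hA : A ⊆ calN N) :
    2 * (piCount ((calN N) \ A) A : ℤ) =
      (A.card : ℤ) * ((N : ℤ) - A.card) - A.sum id := by
  have hinj : Function.Injective (fun k : ℕ => 2 * (k : ℤ) - N + 1) := by
    intro a b h; simp only at h; omega
  -- piCount additive
  have hadd : piCount (calN N) A = piCount ((calN N) \ A) A + piCount A A := by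
    unfold piCount
    have hu : ((calN N \ A) ×ˢ A) ∪ (A ×ˢ A) = (calN N) ×ˢ A := by
      rw [← Finset.union_product, Finset.sdiff_union_of_subset hA]
    rw [← hu, Finset.filter_union, Finset.card_union_of_disjoint]
    apply Finset.disjoint_filter_filter
    rw [Finset.disjoint_left]
    intro p hp hp'
    rw [Finset.mem_product] at hp hp'
    exact (Finset.mem_sdiff.1 hp.1).2 hp'.1
  -- count above each element
  have hcard : ∀ a ∈ calN N, 2 * (((calN N).filter (fun s => a < s)).card : ℤ) = N - 1 - a := by
    intro a ha
    obtain ⟨k, hk, rfl⟩ := Finset.mem_image.1 ha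
    rw [Finset.mem_range] at hk
    rw [show (calN N).filter (fun s => 2 * (k : ℤ) - N + 1 < s)
        = ((Finset.range N).filter (fun k' => k < k')).image (fun k' : ℕ => 2 * (k' : ℤ) - N + 1) from ?_]
    · rw [Finset.card_image_of_injective _ hinj]
      have : (Finset.range N).filter (fun k' => k < k') = Finset.Ioo k N := by
        ext x; simp [Finset.mem_Ioo, and_comm]
      rw [this, Nat.card_Ioo]
      push_cast
      omega
    · unfold calN
      rw [Finset.filter_image]
      congr 1
      apply Finset.filter_congr
      intro x _
      constructor <;> intro h <;> omega
  -- total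
  have htot : 2 * (piCount (calN N) A : ℤ) = A.card * (N - 1) - A.sum id := by
    rw [piCount_eq_sum, Nat.cast_sum, Finset.mul_sum]
    rw [Finset.sum_congr rfl (fun a ha => hcard a (hA ha)), Finset.sum_sub_distrib,
      Finset.sum_const, nsmul_eq_mul]
    simp only [id]
  have hself := piCount_self A
  have h2 : A.card ≤ A.card * A.card := by
    rcases Nat.eq_zero_or_pos A.card with h | h
    · simp [h]
    · exact Nat.le_mul_of_pos_left _ h
  zify [h2] at hself
  rw [hadd] at htot
  push_cast at htot
  linear_combination htot - hself
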